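/- The following polynomial identity holds in ℝ[a,b,c]: I₆(a,b,c)³·I₉(a,b,c)² − I₆(a,b,c)²·I₁₂(a,b,c)² + 36·I₆(a,b,c)·I₉(a,b,c)²·I₁₂(a,b,c) + 108·I₉(a,b,c)⁴ − 32·I₁₂(a,b,c)³ = D(a,b,c). (This is the expression of the 3×3×3 hyperdeterminant in terms of the three fundamental invariants, restricted to semi-simple states.) -/
import Mathlib


/-- Restriction of the degree-6 fundamental invariant to normalized semi-simple states. -/
noncomputable def I₆ (a b c : ℝ) : ℝ :=
  (1 / 27) * (a ^ 6 - 10 * a ^ 3 * b ^ 3 - 10 * a ^ 3 * c ^ 3 + b ^ 6 -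
    10 * b ^ 3 * c ^ 3 + c ^ 6)

/-- Restriction of the degree-9 fundamental invariant to normalized semi-simple states. -/
noncomputable def I₉ (a b c : ℝ) : ℝ :=
  -(Real.sqrt 3 / 243) * (a - b) * (a - c) * (b - c) *
    (a ^ 2 + a * b + b ^ 2) * (a ^ 2 + a * c + c ^ 2) * (b ^ 2 + b * c + c ^ 2)

/-- Restriction of the degree-12 fundamental invariant to normalized semi-simple states. -/
noncomputable def I₁₂ (a b c : ℝ) : ℝ :=
  (1 / 729) * (a ^ 9 * b ^ 3 + a ^ 3 * b ^ 9 + a ^ 9 * c ^ 3 + b ^ 9 * c ^ 3 +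
    a ^ 3 * c ^ 9 + b ^ 3 * c ^ 9 -
    4 * (a ^ 6 * b ^ 6 + a ^ 6 * c ^ 6 + b ^ 6 * c ^ 6) +
    2 * (a ^ 6 * b ^ 3 * c ^ 3 + a ^ 3 * b ^ 6 * c ^ 3 + a ^ 3 * b ^ 3 * c ^ 6))

/-- Restriction of the 3×3×3 hyperdeterminant to normalized semi-simple states
`a|v₁⟩ + b|v₂⟩ + c|v₃⟩`. -/
noncomputable def D (a b c : ℝ) : ℝ :=
  -(4 / 3 ^ 18) * a ^ 3 * b ^ 3 * c ^ 3 * (a + b + c) ^ 3 *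
    (a ^ 2 + 2 * a * b - a * c + b ^ 2 - b * c + c ^ 2) ^ 3 *
    (a ^ 2 - a * b + 2 * a * c + b ^ 2 - b * c + c ^ 2) ^ 3 *
    (a ^ 2 - a * b - a * c + b ^ 2 + 2 * b * c + c ^ 2) ^ 3 *
    (a ^ 2 - a * b - a * c + b ^ 2 - b * c + c ^ 2) ^ 3

/-- The 3×3×3 hyperdeterminant expressed in the fundamental invariants, restricted to
semi-simple states: `Δ₃₃₃ = I₆³I₉² - I₆²I₁₂² + 36I₆I₉²I₁₂ + 108I₉⁴ - 32I₁₂³`. -/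
theorem hyperdet_eq_fundamental_invariants (a b c : ℝ) :
    I₆ a b c ^ 3 * I₉ a b c ^ 2 - I₆ a b c ^ 2 * I₁₂ a b c ^ 2 +
      36 * I₆ a b c * I₉ a b c ^ 2 * I₁₂ a b c + 108 * I₉ a b c ^ 4 -
      32 * I₁₂ a b c ^ 3 = D a b c := by
  have h3 : Real.sqrt 3 ^ 2 = 3 := Real.sq_sqrt (by norm_num)
  have hJ : I₉ a b c ^ 2 = 3 * ((1 / 243) * (a - b) * (a - c) * (b - c) *
      (a ^ 2 + a * b + b ^ 2) * (a ^ 2 + a * c + c ^ 2) * (b ^ 2 + b * c + c ^ 2)) ^ 2 := by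
    rw [I₉]
    linear_combination (((1 / 243) * (a - b) * (a - c) * (b - c) *
      (a ^ 2 + a * b + b ^ 2) * (a ^ 2 + a * c + c ^ 2) * (b ^ 2 + b * c + c ^ 2)) ^ 2) * h3
  rw [show I₉ a b c ^ 4 = (I₉ a b c ^ 2) ^ 2 by ring, hJ, I₆, I₁₂, D]
  ring
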